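/- Let μ = res_K(v_{a,δ}) for some (a,δ) ∈ K̄×Λ. For every nonconstant f ∈ K[x]: f has no root in B(a,δ) if and only if ε_μ(f) < δ. Moreover, if f has no root in B(a,δ), then μ(f) = v(f(a)). -/

import Mathlib

open Polynomial

noncomputable section

variable {K Λ : Type*} [Field K] [AddCommGroup Λ] [LinearOrder Λ] [IsOrderedAddMonoid Λ]

/-- `v` is a `Λ∪{∞}`-valued valuation (written additively) on the algebraic closure of `K`
with trivial support: `v b = ⊤ ↔ b = 0`. -/
structure IsValOnField (v : AlgebraicClosure K → WithTop Λ) : Prop where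
  map_mul : ∀ a b, v (a * b) = v a + v b
  min_le_add : ∀ a b, min (v a) (v b) ≤ v (a + b)
  eq_top_iff : ∀ a, v a = ⊤ ↔ a = 0

/-- A valuation on `K[x]` with trivial support whose restriction to `K` is `v`. -/
structure IsValOnPoly (v : AlgebraicClosure K → WithTop Λ)
    (μ : Polynomial K → WithTop Λ) : Prop where
  map_mul : ∀ f g, μ (f * g) = μ f + μ g
  min_le_add : ∀ f g, min (μ f) (μ g) ≤ μ (f + g)
  eq_top_iff : ∀ f, μ f = ⊤ ↔ f = 0
  extends_v : ∀ c : K, μ (C c) = v (algebraMap K (AlgebraicClosure K) c)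

/-- A valuation on `K̄[x]` with trivial support whose restriction to `K̄` is `v`. -/
structure IsValOnPolyBar (v : AlgebraicClosure K → WithTop Λ)
    (ν : Polynomial (AlgebraicClosure K) → WithTop Λ) : Prop where
  map_mul : ∀ f g, ν (f * g) = ν f + ν g
  min_le_add : ∀ f g, min (ν f) (ν g) ≤ ν (f + g)
  eq_top_iff : ∀ f, ν f = ⊤ ↔ f = 0
  extends_v : ∀ c : AlgebraicClosure K, ν (C c) = v c

/-- Restriction `res_K(ν)` of a valuation `ν` on `K̄[x]` to `K[x]`. -/
def resK (ν : Polynomial (AlgebraicClosure K) → WithTop Λ) :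
    Polynomial K → WithTop Λ :=
  fun f => ν (f.map (algebraMap K (AlgebraicClosure K)))

/-- The monomial valuation `v_{a,δ}` on `K̄[x]`:
`v_{a,δ}(Σ c_k (x−a)^k) = min_k (v(c_k) + kδ)`. -/
def monoVal (v : AlgebraicClosure K → WithTop Λ) (a : AlgebraicClosure K) (δ : Λ) :
    Polynomial (AlgebraicClosure K) → WithTop Λ :=
  fun f => (Finset.range (f.natDegree + 1)).inf
    fun k => v ((taylor a f).coeff k) + ((k • δ : Λ) : WithTop Λ)

/-- The closed ball `B(a,δ) = {b ∈ K̄ : v(b−a) ≥ δ}`. -/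
def cBall (v : AlgebraicClosure K → WithTop Λ) (a : AlgebraicClosure K) (δ : Λ) :
    Set (AlgebraicClosure K) := {b | (δ : WithTop Λ) ≤ v (b - a)}

/-- The open ball `B°(a,δ) = {b ∈ K̄ : v(b−a) > δ}`. -/
def oBall (v : AlgebraicClosure K → WithTop Λ) (a : AlgebraicClosure K) (δ : Λ) :
    Set (AlgebraicClosure K) := {b | (δ : WithTop Λ) < v (b - a)}

/-- The decomposition group `𝒟 = {σ ∈ Aut(K̄/K) : v ∘ σ = v}`. -/
def decompGroup (v : AlgebraicClosure K → WithTop Λ) :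
    Set (AlgebraicClosure K ≃ₐ[K] AlgebraicClosure K) := {σ | ∀ a, v (σ a) = v a}

/-- `deg_K c`, the degree of the minimal polynomial of `c` over `K`. -/
def degK (K : Type*) [Field K] (c : AlgebraicClosure K) : ℕ := (minpoly K c).natDegree

/-- `deg_K S = min {deg_K c : c ∈ S}`. -/
def degKSet (K : Type*) [Field K] (S : Set (AlgebraicClosure K)) : ℕ := sInf (degK K '' S)

/-- `Min_K S = {c ∈ S : deg_K c = deg_K S}`. -/
def MinK (K : Type*) [Field K] (S : Set (AlgebraicClosure K)) : Set (AlgebraicClosure K) :=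
  {c ∈ S | degK K c = degKSet K S}

/-- Pointwise order on valuations on a polynomial ring. -/
def valLE {R : Type*} [Semiring R] (μ η : Polynomial R → WithTop Λ) : Prop := ∀ f, μ f ≤ η f

/-- Strict pointwise order on valuations. -/
def valLT {R : Type*} [Semiring R] (μ η : Polynomial R → WithTop Λ) : Prop := valLE μ η ∧ μ ≠ η

/-- `Λ` is a divisible group. -/
def IsDivisible (Λ : Type*) [AddCommGroup Λ] : Prop :=
  ∀ (γ : Λ) (n : ℕ), 0 < n → ∃ γ', n • γ' = γ

/-- `IsEpsilon μ f e` says that `e = ε_μ(f) = max {(μ(f) − μ(∂_s f))/s : s ≥ 1, ∂_s f ≠ 0}`,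
where `∂_s` is the `s`-th Hasse–Schmidt derivative. It is expressed without division:
`μ f ≤ s•e + μ(∂_s f)` for all admissible `s`, with equality for at least one `s`. -/
def IsEpsilon (μ : Polynomial K → WithTop Λ) (f : Polynomial K) (e : Λ) : Prop :=
  (∀ s : ℕ, 1 ≤ s → hasseDeriv s f ≠ 0 →
      μ f ≤ ((s • e : Λ) : WithTop Λ) + μ (hasseDeriv s f)) ∧
  (∃ s : ℕ, 1 ≤ s ∧ hasseDeriv s f ≠ 0 ∧
      μ f = ((s • e : Λ) : WithTop Λ) + μ (hasseDeriv s f))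

/-- `Q` is an abstract key polynomial for `μ`: `Q` is monic and `ε_μ(f) < ε_μ(Q)` for every
nonconstant `f` of degree smaller than `deg Q`. -/
def IsAbstractKeyPol (μ : Polynomial K → WithTop Λ) (Q : Polynomial K) : Prop :=
  Q.Monic ∧ ∀ f : Polynomial K, 0 < f.natDegree → f.natDegree < Q.natDegree →
    ∀ e eQ : Λ, IsEpsilon μ f e → IsEpsilon μ Q eQ → e < eQ

/-!
Over `K̄` the polynomial splits into linear factors `X - b`. If no root lies in `B(a,δ)`, then
`v(a - b) < δ` for each factor, so in the expansion of `X - b` around `a` the constant term is the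
strict minimum of the terms `v(c_k) + kδ`; this is stable under products, hence `v(f(a))` is the
strict minimum defining `v_{a,δ}(f)`. This gives `v_{a,δ}(f) = v(f(a))` and
`v_{a,δ}(f) < sδ + v_{a,δ}(∂ₛ f)` for all `s ≥ 1`, i.e. `ε(f) < δ`.
Conversely, `v_{a,δ}` only depends on the ball, so it may be computed by expanding around a root
`c ∈ B(a,δ)`: there the constant term vanishes, and the minimum is attained at some `s ≥ 1` with
`sδ + v_{a,δ}(∂ₛ f) ≤ v(∂ₛ f(c)) + sδ = v_{a,δ}(f)`, which forces `ε(f) ≥ δ`.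
-/

namespace IsValOnField

variable {v : AlgebraicClosure K → WithTop Λ}

theorem map_one (hv : IsValOnField v) : v 1 = 0 := by
  have h := hv.map_mul 1 1
  rw [mul_one] at h
  lift v 1 to Λ using (hv.eq_top_iff 1).not.2 one_ne_zero with y
  exact_mod_cast left_eq_add.1 (by exact_mod_cast h)

def toAddValuation (hv : IsValOnField v) : AddValuation (AlgebraicClosure K) (WithTop Λ) :=
  AddValuation.of v ((hv.eq_top_iff 0).2 rfl) hv.map_one hv.min_le_add hv.map_mul

theorem map_neg (hv : IsValOnField v) (x : AlgebraicClosure K) : v (-x) = v x :=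
  hv.toAddValuation.map_neg x

omit [IsOrderedAddMonoid Λ] in
theorem ne_top (hv : IsValOnField v) {x : AlgebraicClosure K} (hx : x ≠ 0) : v x ≠ ⊤ :=
  (hv.eq_top_iff x).not.2 hx

omit [IsOrderedAddMonoid Λ] in
theorem le_map_natCast_mul (hv : IsValOnField v) (n : ℕ) (x : AlgebraicClosure K) :
    v x ≤ v (n * x) := by
  induction n with
  | zero => simp [(hv.eq_top_iff 0).2 rfl]
  | succ n ih => exact le_trans (le_min ih le_rfl) (by simpa [add_mul] using hv.min_le_add _ _)

theorem nsmul_le_map_pow (hv : IsValOnField v) {x : AlgebraicClosure K} {δ : Λ}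
    (hx : (δ : WithTop Λ) ≤ v x) (n : ℕ) : ((n • δ : Λ) : WithTop Λ) ≤ v (x ^ n) := by
  rw [WithTop.coe_nsmul]
  exact (nsmul_le_nsmul_right hx n).trans_eq (hv.toAddValuation.map_pow x n).symm

theorem le_map_sum (hv : IsValOnField v) {ι : Type*} {s : Finset ι} {F : ι → AlgebraicClosure K}
    {B : WithTop Λ} (hF : ∀ i ∈ s, B ≤ v (F i)) : B ≤ v (∑ i ∈ s, F i) :=
  hv.toAddValuation.map_le_sum hF

end IsValOnField

theorem Polynomial.taylor_coeff_hasseDeriv {R : Type*} [CommSemiring R] (r : R) (p : R[X])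
    (s j : ℕ) :
    (taylor r (hasseDeriv s p)).coeff j = ((j + s).choose j : R) * (taylor r p).coeff (j + s) := by
  have hcomp := LinearMap.congr_fun (hasseDeriv_comp (R := R) j s) p
  simp only [LinearMap.comp_apply, LinearMap.smul_apply] at hcomp
  rw [taylor_coeff, hcomp, taylor_coeff, nsmul_eq_mul, eval_mul, eval_natCast]

section MonoVal

variable {v : AlgebraicClosure K → WithTop Λ} {a c : AlgebraicClosure K} {δ : Λ}
  {g : (AlgebraicClosure K)[X]}

theorem monoVal_le_taylor_coeff (hv : IsValOnField v) (a : AlgebraicClosure K) (δ : Λ)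
    (g : (AlgebraicClosure K)[X]) (k : ℕ) :
    monoVal v a δ g ≤ v ((taylor a g).coeff k) + ((k • δ : Λ) : WithTop Λ) := by
  by_cases hk : k ≤ g.natDegree
  · exact Finset.inf_le (Finset.mem_range.2 (Nat.lt_succ_of_le hk))
  · rw [coeff_eq_zero_of_natDegree_lt (by rwa [natDegree_taylor, ← not_le]),
      (hv.eq_top_iff 0).2 rfl, top_add]
    exact le_top

theorem le_monoVal_iff (hv : IsValOnField v) {B : WithTop Λ} :
    B ≤ monoVal v a δ g ↔ ∀ k, B ≤ v ((taylor a g).coeff k) + ((k • δ : Λ) : WithTop Λ) :=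
  ⟨fun h k => h.trans (monoVal_le_taylor_coeff hv a δ g k), fun h => Finset.le_inf fun k _ => h k⟩

omit [IsOrderedAddMonoid Λ] in
theorem exists_monoVal_eq (a : AlgebraicClosure K) (δ : Λ) (g : (AlgebraicClosure K)[X]) :
    ∃ k, monoVal v a δ g = v ((taylor a g).coeff k) + ((k • δ : Λ) : WithTop Λ) :=
  let ⟨k, _, hk⟩ := Finset.exists_mem_eq_inf _ Finset.nonempty_range_add_one _
  ⟨k, hk⟩

theorem monoVal_ne_top (hv : IsValOnField v) (hg : g ≠ 0) : monoVal v a δ g ≠ ⊤ := by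
  refine ne_top_of_le_ne_top ?_ (monoVal_le_taylor_coeff hv a δ g g.natDegree)
  have hlead : (taylor a g).coeff g.natDegree ≠ 0 := by
    simpa [natDegree_taylor] using leadingCoeff_ne_zero.2 ((taylor_eq_zero a g).not.2 hg)
  exact WithTop.add_ne_top.2 ⟨hv.ne_top hlead, WithTop.coe_ne_top⟩

theorem monoVal_le_monoVal_hasseDeriv (hv : IsValOnField v) (a : AlgebraicClosure K) (δ : Λ)
    (g : (AlgebraicClosure K)[X]) (s : ℕ) :
    monoVal v a δ g ≤ ((s • δ : Λ) : WithTop Λ) + monoVal v a δ (hasseDeriv s g) := by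
  obtain ⟨j, hj⟩ := exists_monoVal_eq (v := v) a δ (hasseDeriv s g)
  calc monoVal v a δ g ≤ v ((taylor a g).coeff (j + s)) + (((j + s) • δ : Λ) : WithTop Λ) :=
        monoVal_le_taylor_coeff hv a δ g _
    _ ≤ v ((taylor a (hasseDeriv s g)).coeff j) + (((j + s) • δ : Λ) : WithTop Λ) := by
        rw [taylor_coeff_hasseDeriv]; gcongr; exact hv.le_map_natCast_mul _ _
    _ = _ := by rw [hj, add_nsmul, WithTop.coe_add]; ac_rfl

theorem monoVal_le_eval (hv : IsValOnField v) (hc : c ∈ cBall v a δ)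
    (p : (AlgebraicClosure K)[X]) : monoVal v a δ p ≤ v (p.eval c) := by
  rw [← sub_add_cancel c a, ← taylor_eval, eval_eq_sum_range]
  refine hv.le_map_sum fun i _ => ?_
  rw [hv.map_mul]
  exact (monoVal_le_taylor_coeff hv a δ p i).trans (by gcongr; exact hv.nsmul_le_map_pow hc i)

theorem mem_cBall_comm (hv : IsValOnField v) : c ∈ cBall v a δ ↔ a ∈ cBall v c δ := by
  simp only [cBall, Set.mem_ofPred_eq, ← hv.map_neg (c - a), neg_sub]

theorem monoVal_le_monoVal_of_mem_cBall (hv : IsValOnField v) (hc : c ∈ cBall v a δ)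
    (g : (AlgebraicClosure K)[X]) : monoVal v a δ g ≤ monoVal v c δ g := by
  refine (le_monoVal_iff hv).2 fun j => ?_
  rw [taylor_coeff, add_comm]
  exact (monoVal_le_monoVal_hasseDeriv hv a δ g j).trans
    (by gcongr; exact monoVal_le_eval hv hc _)

theorem monoVal_eq_of_mem_cBall (hv : IsValOnField v) (hc : c ∈ cBall v a δ) :
    monoVal v c δ = monoVal v a δ :=
  funext fun g => le_antisymm (monoVal_le_monoVal_of_mem_cBall hv ((mem_cBall_comm hv).1 hc) g)
    (monoVal_le_monoVal_of_mem_cBall hv hc g)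

theorem eval_lt_taylor_coeff_X_sub_C_mul (hv : IsValOnField v) {b : AlgebraicClosure K}
    (hb : b ∉ cBall v a δ) {p : (AlgebraicClosure K)[X]}
    (hp : ∀ k, 1 ≤ k → v (p.eval a) < v ((taylor a p).coeff k) + ((k • δ : Λ) : WithTop Λ))
    {k : ℕ} (hk : 1 ≤ k) :
    v (((X - C b) * p).eval a) <
      v ((taylor a ((X - C b) * p)).coeff k) + ((k • δ : Λ) : WithTop Λ) := by
  set w := a - b
  set u : ℕ → AlgebraicClosure K := fun j => (taylor a p).coeff j
  have hw : v w < δ := by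
    simpa [cBall, w, ← hv.map_neg (b - a)] using hb
  have hu0 : v (u 0) ≠ ⊤ := by
    simpa [u, taylor_coeff_zero] using (hp 1 le_rfl).ne_top
  have hweak : ∀ j, v (u 0) ≤ v (u j) + ((j • δ : Λ) : WithTop Λ) := by
    rintro (_ | j)
    · simp
    · simpa [u, taylor_coeff_zero] using (hp (j + 1) (by omega)).le
  obtain ⟨m, rfl⟩ := Nat.exists_eq_add_of_le' hk
  have htaylor : taylor a ((X - C b) * p) = (X + C w) * taylor a p := by
    rw [taylor_mul, taylor_apply, sub_comp, X_comp, C_comp, C_sub]; ring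
  have hcoeff : (taylor a ((X - C b) * p)).coeff (m + 1) = u m + w * u (m + 1) := by
    rw [htaylor, add_mul, coeff_add, coeff_X_mul, coeff_C_mul]
  have heval : v (((X - C b) * p).eval a) = v w + v (u 0) := by
    simp [u, w, taylor_coeff_zero, hv.map_mul]
  rw [heval, hcoeff]
  refine lt_of_lt_of_le ?_ (add_le_add_left (hv.min_le_add _ _) _)
  rcases min_cases (v (u m)) (v (w * u (m + 1))) with ⟨hmin, _⟩ | ⟨hmin, _⟩ <;> rw [hmin]
  · calc v w + v (u 0) < δ + (v (u m) + ((m • δ : Λ) : WithTop Λ)) :=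
          WithTop.add_lt_add_of_lt_of_le hu0 hw (hweak m)
      _ = v (u m) + (((m + 1) • δ : Λ) : WithTop Λ) := by
          rw [succ_nsmul, WithTop.coe_add]; ac_rfl
  · rw [hv.map_mul, add_assoc]
    exact WithTop.add_lt_add_left (ne_top_of_lt hw)
      (by simpa [u, taylor_coeff_zero] using hp _ (by omega))

theorem eval_lt_taylor_coeff_of_roots_not_mem_cBall (hv : IsValOnField v) (hg : g ≠ 0)
    (hroots : ∀ b, g.IsRoot b → b ∉ cBall v a δ) {k : ℕ} (hk : 1 ≤ k) :
    v (g.eval a) < v ((taylor a g).coeff k) + ((k • δ : Λ) : WithTop Λ) := by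
  suffices key : ∀ s : Multiset (AlgebraicClosure K), (∀ b ∈ s, b ∉ cBall v a δ) →
      ∀ k, 1 ≤ k → v ((C g.leadingCoeff * (s.map (X - C ·)).prod).eval a) <
        v ((taylor a (C g.leadingCoeff * (s.map (X - C ·)).prod)).coeff k) +
          ((k • δ : Λ) : WithTop Λ) by
    have := key g.roots (fun b hb => hroots b (isRoot_of_mem_roots hb)) k hk
    rwa [C_leadingCoeff_mul_prod_multiset_X_sub_C IsAlgClosed.card_roots_eq_natDegree] at this
  intro s
  induction s using Multiset.induction_on with
  | empty =>
    intro _ k hk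
    simp [taylor_C, coeff_C, Nat.one_le_iff_ne_zero.1 hk, (hv.eq_top_iff _).2 rfl,
      lt_top_iff_ne_top, hv.ne_top (leadingCoeff_ne_zero.2 hg)]
  | cons b s ih =>
    intro hs k hk
    rw [Multiset.map_cons, Multiset.prod_cons, mul_left_comm]
    exact eval_lt_taylor_coeff_X_sub_C_mul hv (hs b (Multiset.mem_cons_self b s))
      (ih fun b' hb' => hs b' (Multiset.mem_cons_of_mem hb')) hk

theorem monoVal_eq_eval_of_roots_not_mem_cBall (hv : IsValOnField v) (hg : g ≠ 0)
    (hroots : ∀ b, g.IsRoot b → b ∉ cBall v a δ) : monoVal v a δ g = v (g.eval a) := by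
  refine le_antisymm (by simpa [taylor_coeff_zero] using monoVal_le_taylor_coeff hv a δ g 0)
    ((le_monoVal_iff hv).2 fun k => ?_)
  rcases Nat.eq_zero_or_pos k with rfl | hk
  · simp [taylor_coeff_zero]
  · exact (eval_lt_taylor_coeff_of_roots_not_mem_cBall hv hg hroots hk).le

theorem monoVal_lt_monoVal_hasseDeriv_of_roots_not_mem_cBall (hv : IsValOnField v) (hg : g ≠ 0)
    (hroots : ∀ b, g.IsRoot b → b ∉ cBall v a δ) {s : ℕ} (hs : 1 ≤ s) :
    monoVal v a δ g < ((s • δ : Λ) : WithTop Λ) + monoVal v a δ (hasseDeriv s g) := by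
  obtain ⟨j, hj⟩ := exists_monoVal_eq (v := v) a δ (hasseDeriv s g)
  rw [monoVal_eq_eval_of_roots_not_mem_cBall hv hg hroots, hj]
  calc v (g.eval a) < v ((taylor a g).coeff (j + s)) + (((j + s) • δ : Λ) : WithTop Λ) :=
        eval_lt_taylor_coeff_of_roots_not_mem_cBall hv hg hroots (by omega)
    _ ≤ v ((taylor a (hasseDeriv s g)).coeff j) + (((j + s) • δ : Λ) : WithTop Λ) := by
        rw [taylor_coeff_hasseDeriv]; gcongr; exact hv.le_map_natCast_mul _ _
    _ = _ := by rw [add_nsmul, WithTop.coe_add]; ac_rfl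

theorem exists_monoVal_hasseDeriv_le_of_isRoot (hv : IsValOnField v) (hg : g ≠ 0)
    (hc : c ∈ cBall v a δ) (hroot : g.IsRoot c) :
    ∃ s, 1 ≤ s ∧ hasseDeriv s g ≠ 0 ∧
      ((s • δ : Λ) : WithTop Λ) + monoVal v a δ (hasseDeriv s g) ≤ monoVal v a δ g := by
  obtain ⟨s, hs⟩ := exists_monoVal_eq (v := v) c δ g
  have hne : v ((hasseDeriv s g).eval c) ≠ ⊤ := by
    have := monoVal_ne_top hv (a := c) (δ := δ) hg
    rw [hs, taylor_coeff] at this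
    exact (WithTop.add_ne_top.1 this).1
  have hs1 : 1 ≤ s := by
    refine Nat.one_le_iff_ne_zero.2 fun hs0 => hne ?_
    rw [hs0, hasseDeriv_zero, LinearMap.id_apply, hroot.eq_zero, (hv.eq_top_iff 0).2 rfl]
  refine ⟨s, hs1, fun h0 => hne (by rw [h0, eval_zero, (hv.eq_top_iff 0).2 rfl]), ?_⟩
  calc ((s • δ : Λ) : WithTop Λ) + monoVal v a δ (hasseDeriv s g)
      ≤ ((s • δ : Λ) : WithTop Λ) + v ((hasseDeriv s g).eval c) := by
        gcongr; exact monoVal_le_eval hv hc _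
    _ = monoVal v c δ g := by rw [hs, taylor_coeff, add_comm]
    _ = monoVal v a δ g := by rw [monoVal_eq_of_mem_cBall hv hc]

theorem roots_not_mem_cBall_iff (hv : IsValOnField v) (hg : g ≠ 0) :
    (∀ c, g.IsRoot c → c ∉ cBall v a δ) ↔ ∀ s, 1 ≤ s → hasseDeriv s g ≠ 0 →
      monoVal v a δ g < ((s • δ : Λ) : WithTop Λ) + monoVal v a δ (hasseDeriv s g) := by
  refine ⟨fun hroots s hs _ =>
    monoVal_lt_monoVal_hasseDeriv_of_roots_not_mem_cBall hv hg hroots hs, fun H c hroot hc => ?_⟩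
  obtain ⟨s, hs, hs0, hle⟩ := exists_monoVal_hasseDeriv_le_of_isRoot hv hg hc hroot
  exact (H s hs hs0).not_ge hle

end MonoVal

theorem Polynomial.map_hasseDeriv {R S : Type*} [Semiring R] [Semiring S] (φ : R →+* S)
    (s : ℕ) (p : R[X]) : (hasseDeriv s p).map φ = hasseDeriv s (p.map φ) := by
  ext m
  simp [coeff_map, hasseDeriv_coeff]

theorem roots_not_mem_cBall_iff_resK {v : AlgebraicClosure K → WithTop Λ} (hv : IsValOnField v)
    (a : AlgebraicClosure K) (δ : Λ) {f : K[X]} (hf : f ≠ 0) :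
    (∀ c, aeval c f = 0 → c ∉ cBall v a δ) ↔ ∀ s, 1 ≤ s → hasseDeriv s f ≠ 0 →
      resK (monoVal v a δ) f <
        ((s • δ : Λ) : WithTop Λ) + resK (monoVal v a δ) (hasseDeriv s f) := by
  have hmap (s : ℕ) :
      hasseDeriv s f ≠ 0 ↔ hasseDeriv s (f.map (algebraMap K (AlgebraicClosure K))) ≠ 0 := by
    rw [← map_hasseDeriv, Polynomial.map_ne_zero_iff (algebraMap K _).injective]
  simp only [resK, map_hasseDeriv, hmap, ← eval_map_algebraMap]
  exact roots_not_mem_cBall_iff hv (Polynomial.map_ne_zero hf)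

section Epsilon

variable {μ : K[X] → WithTop Λ} {f : K[X]} {e : Λ}

theorem IsEpsilon.lt_iff (he : IsEpsilon μ f e)
    (hμ : ∀ s, hasseDeriv s f ≠ 0 → μ (hasseDeriv s f) ≠ ⊤) (δ : Λ) :
    e < δ ↔ ∀ s, 1 ≤ s → hasseDeriv s f ≠ 0 →
      μ f < ((s • δ : Λ) : WithTop Λ) + μ (hasseDeriv s f) := by
  refine ⟨fun hlt s hs hs0 => (he.1 s hs hs0).trans_lt ?_, fun H => ?_⟩
  · exact WithTop.add_lt_add_right (hμ s hs0)
      (WithTop.coe_lt_coe.2 (nsmul_lt_nsmul_right (by omega) hlt))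
  · obtain ⟨s, hs, hs0, heq⟩ := he.2
    have hlt := H s hs hs0
    rw [heq] at hlt
    exact lt_of_nsmul_lt_nsmul_right s (WithTop.coe_lt_coe.1 (lt_of_add_lt_add_right hlt))

/-- The witness is the largest of the finitely many `(μ f - μ (∂ₛ f)) / s`. -/
theorem exists_isEpsilon (hdiv : IsDivisible Λ) (hf : 0 < f.natDegree)
    (hμ : ∀ p, p ≠ 0 → μ p ≠ ⊤) : ∃ e, IsEpsilon μ f e := by
  classical
  set E := (Finset.Icc 1 f.natDegree).filter (hasseDeriv · f ≠ 0)
  have hE (s : ℕ) : s ∈ E ↔ 1 ≤ s ∧ hasseDeriv s f ≠ 0 := by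
    simp only [E, Finset.mem_filter, Finset.mem_Icc]
    refine ⟨fun h => ⟨h.1.1, h.2⟩, fun h => ⟨⟨h.1, ?_⟩, h.2⟩⟩
    exact not_lt.1 (mt (hasseDeriv_eq_zero_of_lt_natDegree f s) h.2)
  have hEne : E.Nonempty := ⟨f.natDegree, (hE _).2 ⟨hf, by
    simp [hasseDeriv_natDegree_eq_C, ne_zero_of_natDegree_gt hf]⟩⟩
  have hquot (s : ℕ) : ∃ d : Λ, s ∈ E → μ f = ((s • d : Λ) : WithTop Λ) + μ (hasseDeriv s f) := by
    by_cases hs : s ∈ E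
    · obtain ⟨hs1, hs0⟩ := (hE s).1 hs
      lift μ f to Λ using hμ f (ne_zero_of_natDegree_gt hf) with x
      lift μ (hasseDeriv s f) to Λ using hμ _ hs0 with y
      obtain ⟨d, hd⟩ := hdiv (x - y) s hs1
      exact ⟨d, fun _ => by rw [← WithTop.coe_add, hd, sub_add_cancel]⟩
    · exact ⟨0, fun h => absurd h hs⟩
  choose d hd using hquot
  obtain ⟨s₀, hs₀, hmax⟩ := Finset.exists_max_image E d hEne
  refine ⟨d s₀, fun s hs hs0 => ?_, s₀, ((hE s₀).1 hs₀).1, ((hE s₀).1 hs₀).2, hd s₀ hs₀⟩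
  have hsE := (hE s).2 ⟨hs, hs0⟩
  rw [hd s hsE]
  gcongr
  exact WithTop.coe_le_coe.2 (nsmul_le_nsmul_right (hmax s hsE) s)

end Epsilon

/-- for `μ = res_K(v_{a,δ})` and nonconstant `f ∈ K[x]`,
`f` has no root in `B(a,δ)` iff `ε_μ(f) < δ`; moreover, in that case `μ(f) = v(f(a))`. -/
theorem noRootIffEpsilonLt
    (v : AlgebraicClosure K → WithTop Λ) (hv : IsValOnField v)
    (hdiv : IsDivisible Λ)
    (a : AlgebraicClosure K) (δ : Λ)
    (f : Polynomial K) (hf : 0 < f.natDegree) :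
    ((∀ c : AlgebraicClosure K, aeval c f = 0 → c ∉ cBall v a δ) ↔
      ∃ e : Λ, IsEpsilon (resK (monoVal v a δ)) f e ∧ e < δ) ∧
    ((∀ c : AlgebraicClosure K, aeval c f = 0 → c ∉ cBall v a δ) →
      resK (monoVal v a δ) f = v (aeval a f)) := by
  have hf0 : f ≠ 0 := ne_zero_of_natDegree_gt hf
  have hμ (p : K[X]) (hp : p ≠ 0) : resK (monoVal v a δ) p ≠ ⊤ :=
    monoVal_ne_top hv (Polynomial.map_ne_zero hp)
  obtain ⟨e, he⟩ := exists_isEpsilon hdiv hf hμ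
  refine ⟨(roots_not_mem_cBall_iff_resK hv a δ hf0).trans
    ⟨fun H => ⟨e, he, (he.lt_iff (fun _ => hμ _) δ).2 H⟩,
      fun ⟨e', he', hlt⟩ => (he'.lt_iff (fun _ => hμ _) δ).1 hlt⟩, fun H => ?_⟩
  rw [resK, monoVal_eq_eval_of_roots_not_mem_cBall hv (Polynomial.map_ne_zero hf0)
    (by simpa [eval_map_algebraMap] using H), eval_map_algebraMap]
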